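/- Let m ≥ 4 and let μ₁ be the bracket of 𝔤^{4,1}_{(m,m−1)}. For 1 ≤ k ≤ 2m−4 let ψ̄_{2,k} be the prolongation by zeros of ψ_{2,k} to 𝔤^{4,1}_{(m,m−1)} (so ψ̄_{2,k}(X₂,X_j) = X_{j+1+k} for 3 ≤ j ≤ 2m−1−k and all other values on basis pairs are zero). Then the bilinear bracket μ₁ + ψ̄_{2,k} on ℂ^{2m+2} satisfies the Jacobi identity if and only if k = 2m−5 or k = 2m−4. -/
import Mathlib


open Module

/-- The `i`-th standard basis vector of `ℂⁿ` (1-indexed); `0` when out of range. -/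
noncomputable def ev (n : ℕ) (i : ℕ) : Fin n → ℂ :=
  if h : 1 ≤ i ∧ i ≤ n then Pi.single (⟨i - 1, by omega⟩ : Fin n) 1 else 0

/-- The bilinear map on `ℂⁿ` determined by the (1-indexed) structure constants `c`:
`brk c x y = ∑ i j, (x i * y j) • c (i+1) (j+1)`. -/
noncomputable def brk {n : ℕ} (c : ℕ → ℕ → (Fin n → ℂ)) :
    (Fin n → ℂ) →ₗ[ℂ] (Fin n → ℂ) →ₗ[ℂ] (Fin n → ℂ) :=
  ∑ i : Fin n, ∑ j : Fin n,
    (LinearMap.proj i).smulRight ((LinearMap.proj j).smulRight (c (i.val + 1) (j.val + 1)))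

/-- The Jacobi identity for a bracket `μ`. -/
def Jacobi {n : ℕ} (μ : (Fin n → ℂ) → (Fin n → ℂ) → (Fin n → ℂ)) : Prop :=
  ∀ x y z, μ (μ x y) z + μ (μ y z) x + μ (μ z x) y = 0

/-- Upper-triangular part of the structure constants of `𝔤^{4,1}_{(m,m-1)}`
(1-indexed basis `X₁,…,X_{2m+2}`): `[X₁,Xⱼ] = X_{j+1}` for `2 ≤ j ≤ 2m-1`,
`[X₁,X_{2m+1}] = X_{2m+2}`, `[Xⱼ,X_{2m+1-j}] = (-1)ʲ X_{2m+1}` and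
`[Xⱼ,X_{2m+2-j}] = (-1)ʲ (m+1-j) X_{2m+2}` for `2 ≤ j ≤ m`. -/
noncomputable def g41T (m : ℕ) (a c : ℕ) : Fin (2 * m + 2) → ℂ :=
  (if a = 1 ∧ 2 ≤ c ∧ c ≤ 2 * m - 1 then ev (2 * m + 2) (c + 1) else 0) +
  (if a = 1 ∧ c = 2 * m + 1 then ev (2 * m + 2) (2 * m + 2) else 0) +
  (if 2 ≤ a ∧ a ≤ m ∧ a + c = 2 * m + 1 then
    ((-1 : ℂ)) ^ a • ev (2 * m + 2) (2 * m + 1) else 0) +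
  (if 2 ≤ a ∧ a ≤ m ∧ a + c = 2 * m + 2 then
    (((-1 : ℂ)) ^ a * ((m + 1 - a : ℕ) : ℂ)) • ev (2 * m + 2) (2 * m + 2) else 0)

/-- Antisymmetrized structure constants of `𝔤^{4,1}_{(m,m-1)}`; `brk (g41c m)` is
its Lie bracket `μ₁`. -/
noncomputable def g41c (m : ℕ) (a c : ℕ) : Fin (2 * m + 2) → ℂ := g41T m a c - g41T m c a

/-- Upper-triangular part of the structure constants of the prolongation by zeros
`ψ̄_{2,k}`: `ψ̄_{2,k}(X₂,Xⱼ) = X_{j+1+k}` for `3 ≤ j ≤ 2m-1-k`. -/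
noncomputable def psibarT (m k : ℕ) (a c : ℕ) : Fin (2 * m + 2) → ℂ :=
  if a = 2 ∧ 3 ≤ c ∧ c ≤ 2 * m - 1 - k then ev (2 * m + 2) (c + 1 + k) else 0

/-- Antisymmetrized structure constants of `ψ̄_{2,k}`. -/
noncomputable def psibarc (m k : ℕ) (a c : ℕ) : Fin (2 * m + 2) → ℂ :=
  psibarT m k a c - psibarT m k c a

noncomputable def c1 (m : ℕ) (a b : ℕ) : ℂ :=
  if a = 1 ∧ (2 ≤ b ∧ b ≤ 2 * m - 1 ∨ b = 2 * m + 1) then 1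
  else if b = 1 ∧ (2 ≤ a ∧ a ≤ 2 * m - 1 ∨ a = 2 * m + 1) then -1
  else if 2 ≤ a ∧ 2 ≤ b ∧ a + b = 2 * m + 1 then (-1 : ℂ) ^ a
  else if 2 ≤ a ∧ a ≤ 2 * m ∧ 2 ≤ b ∧ a + b = 2 * m + 2 then
    (-1 : ℂ) ^ a * ((m : ℂ) + 1 - (a : ℂ))
  else 0

noncomputable def c2 (m k : ℕ) (a b : ℕ) : ℂ :=
  if a = 2 ∧ 3 ≤ b ∧ b ≤ 2 * m - 1 - k then 1
  else if b = 2 ∧ 3 ≤ a ∧ a ≤ 2 * m - 1 - k then -1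
  else 0

noncomputable def Cc (m k : ℕ) (a b : ℕ) : Fin (2 * m + 2) → ℂ :=
  g41c m a b + psibarc m k a b

lemma ev_out {n i : ℕ} (h : ¬ (1 ≤ i ∧ i ≤ n)) : ev n i = 0 := dif_neg h

-- parity helpers
lemma npow_odd {a b : ℕ} (h : Odd (a + b)) : (-1 : ℂ) ^ a = -(-1 : ℂ) ^ b := by
  have h1 : (-1 : ℂ) ^ (a + b) = -1 := h.neg_one_pow
  have h2 : (-1 : ℂ) ^ b * (-1 : ℂ) ^ b = 1 := by
    rw [← pow_add]; exact Even.neg_one_pow ⟨b, rfl⟩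
  calc (-1 : ℂ) ^ a = (-1 : ℂ) ^ a * ((-1 : ℂ) ^ b * (-1 : ℂ) ^ b) := by rw [h2, mul_one]
    _ = (-1 : ℂ) ^ (a + b) * (-1 : ℂ) ^ b := by rw [← mul_assoc, ← pow_add]
    _ = -(-1 : ℂ) ^ b := by rw [h1]; ring

lemma npow_even {a b : ℕ} (h : Even (a + b)) : (-1 : ℂ) ^ a = (-1 : ℂ) ^ b := by
  have h1 : (-1 : ℂ) ^ (a + b) = 1 := h.neg_one_pow
  have h2 : (-1 : ℂ) ^ b * (-1 : ℂ) ^ b = 1 := by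
    rw [← pow_add]; exact Even.neg_one_pow ⟨b, rfl⟩
  calc (-1 : ℂ) ^ a = (-1 : ℂ) ^ a * ((-1 : ℂ) ^ b * (-1 : ℂ) ^ b) := by rw [h2, mul_one]
    _ = (-1 : ℂ) ^ (a + b) * (-1 : ℂ) ^ b := by rw [← mul_assoc, ← pow_add]
    _ = (-1 : ℂ) ^ b := by rw [h1]; ring

-- c1 / c2 facts
lemma c1_ne {m a b : ℕ} (h : c1 m a b ≠ 0) :
    (a = 1 ∧ (2 ≤ b ∧ b ≤ 2 * m - 1 ∨ b = 2 * m + 1)) ∨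
    (b = 1 ∧ (2 ≤ a ∧ a ≤ 2 * m - 1 ∨ a = 2 * m + 1)) ∨
    (2 ≤ a ∧ 2 ≤ b ∧ a + b = 2 * m + 1) ∨
    (2 ≤ a ∧ a ≤ 2 * m ∧ 2 ≤ b ∧ a + b = 2 * m + 2) := by
  unfold c1 at h
  split_ifs at h with h1 h2 h3 h4 <;> tauto

lemma c1_zero {m a b : ℕ} (h : ¬ (a = 1 ∨ b = 1 ∨ a + b = 2 * m + 1 ∨ a + b = 2 * m + 2)) :
    c1 m a b = 0 := by
  unfold c1
  split_ifs with h1 h2 h3 h4 <;> first | rfl | (exfalso; omega)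

lemma c1_val1 {m a b : ℕ} (ha : a = 1) (hb : 2 ≤ b) (hb2 : b ≤ 2 * m - 1 ∨ b = 2 * m + 1) :
    c1 m a b = 1 := by
  unfold c1; rw [if_pos (by omega)]

lemma c1_val2 {m a b : ℕ} (hb : b = 1) (ha : 2 ≤ a) (ha2 : a ≤ 2 * m - 1 ∨ a = 2 * m + 1) :
    c1 m a b = -1 := by
  unfold c1; rw [if_neg (by omega), if_pos (by omega)]

lemma c1_val3 {m a b : ℕ} (hm : 4 ≤ m) (ha : 2 ≤ a) (hb : 2 ≤ b) (hab : a + b = 2 * m + 1) :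
    c1 m a b = (-1 : ℂ) ^ a := by
  unfold c1; rw [if_neg (by omega), if_neg (by omega), if_pos (by omega)]

lemma c1_val4 {m a b : ℕ} (hm : 4 ≤ m) (ha : 2 ≤ a) (ha2 : a ≤ 2 * m) (hb : 2 ≤ b)
    (hab : a + b = 2 * m + 2) :
    c1 m a b = (-1 : ℂ) ^ a * ((m : ℂ) + 1 - (a : ℂ)) := by
  unfold c1; rw [if_neg (by omega), if_neg (by omega), if_neg (by omega), if_pos (by omega)]

lemma c2_ne {m k a b : ℕ} (h : c2 m k a b ≠ 0) :
    (a = 2 ∧ 3 ≤ b ∧ b ≤ 2 * m - 1 - k) ∨ (b = 2 ∧ 3 ≤ a ∧ a ≤ 2 * m - 1 - k) := by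
  unfold c2 at h
  split_ifs at h with h1 h2 <;> tauto

lemma c2_zero {m k a b : ℕ}
    (h : ¬ ((a = 2 ∧ 3 ≤ b ∧ b ≤ 2 * m - 1 - k) ∨ (b = 2 ∧ 3 ≤ a ∧ a ≤ 2 * m - 1 - k))) :
    c2 m k a b = 0 := by
  unfold c2
  split_ifs with h1 h2 <;> first | rfl | (exfalso; omega)

lemma c2_val1 {m k a b : ℕ} (ha : a = 2) (hb : 3 ≤ b) (hb2 : b ≤ 2 * m - 1 - k) :
    c2 m k a b = 1 := by
  unfold c2; rw [if_pos (by omega)]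

lemma c2_val2 {m k a b : ℕ} (hb : b = 2) (ha : 3 ≤ a) (ha2 : a ≤ 2 * m - 1 - k) :
    c2 m k a b = -1 := by
  unfold c2; rw [if_neg (by omega), if_pos (by omega)]

lemma c1_val3' {m a b : ℕ} (ha : 2 ≤ a) (hb : 2 ≤ b) (hab : a + b = 2 * m + 1) :
    c1 m a b = (-1 : ℂ) ^ a := by
  unfold c1; rw [if_neg (by omega), if_neg (by omega), if_pos (by omega)]

lemma c1_val4' {m a b : ℕ} (ha : 2 ≤ a) (ha2 : a ≤ 2 * m) (hb : 2 ≤ b)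
    (hab : a + b = 2 * m + 2) :
    c1 m a b = (-1 : ℂ) ^ a * ((m : ℂ) + 1 - (a : ℂ)) := by
  unfold c1; rw [if_neg (by omega), if_neg (by omega), if_neg (by omega), if_pos (by omega)]

lemma c1_zero' {m a b : ℕ}
    (h1 : ¬(a = 1 ∧ (2 ≤ b ∧ b ≤ 2 * m - 1 ∨ b = 2 * m + 1)))
    (h2 : ¬(b = 1 ∧ (2 ≤ a ∧ a ≤ 2 * m - 1 ∨ a = 2 * m + 1)))
    (h3 : ¬(2 ≤ a ∧ 2 ≤ b ∧ a + b = 2 * m + 1))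
    (h4 : ¬(2 ≤ a ∧ a ≤ 2 * m ∧ 2 ≤ b ∧ a + b = 2 * m + 2)) :
    c1 m a b = 0 := by
  unfold c1; rw [if_neg h1, if_neg h2, if_neg h3, if_neg h4]

lemma ev_congr {n : ℕ} {i j : ℕ} (h : i = j) : ev n i = ev n j := by rw [h]

lemma g41c_decomp (m : ℕ) (hm : 4 ≤ m) (a b : ℕ) :
    g41c m a b = c1 m a b • ev (2 * m + 2) (a + b) := by
  by_cases hR1 : a = 1 ∧ 2 ≤ b ∧ b ≤ 2 * m - 1
  · rw [c1_val1 hR1.1 hR1.2.1 (Or.inl hR1.2.2)]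
    unfold g41c g41T
    split_ifs <;> try (exfalso; omega)
    simp only [add_zero, zero_add, sub_zero, one_smul]
    exact ev_congr (by omega)
  by_cases hR2 : a = 1 ∧ b = 2 * m + 1
  · rw [c1_val1 hR2.1 (by omega) (Or.inr hR2.2)]
    unfold g41c g41T
    split_ifs <;> try (exfalso; omega)
    simp only [add_zero, zero_add, sub_zero, one_smul]
    exact ev_congr (by omega)
  by_cases hR3 : b = 1 ∧ 2 ≤ a ∧ a ≤ 2 * m - 1
  · rw [c1_val2 hR3.1 hR3.2.1 (Or.inl hR3.2.2)]
    unfold g41c g41T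
    split_ifs <;> try (exfalso; omega)
    simp only [add_zero, zero_add, zero_sub, neg_smul, one_smul, neg_inj]
    exact ev_congr (by omega)
  by_cases hR4 : b = 1 ∧ a = 2 * m + 1
  · rw [c1_val2 hR4.1 (by omega) (Or.inr hR4.2)]
    unfold g41c g41T
    split_ifs <;> try (exfalso; omega)
    simp only [add_zero, zero_add, zero_sub, neg_smul, one_smul, neg_inj]
    exact ev_congr (by omega)
  by_cases hR5 : 2 ≤ a ∧ a ≤ m ∧ a + b = 2 * m + 1
  · rw [c1_val3' hR5.1 (by omega) hR5.2.2]
    unfold g41c g41T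
    split_ifs <;> try (exfalso; omega)
    simp only [add_zero, zero_add, sub_zero]
    rw [ev_congr (show 2 * m + 1 = a + b from by omega)]
  by_cases hR6 : 2 ≤ b ∧ b ≤ m ∧ a + b = 2 * m + 1
  · rw [c1_val3' (by omega) hR6.1 hR6.2.2]
    unfold g41c g41T
    split_ifs <;> try (exfalso; omega)
    simp only [add_zero, zero_add, zero_sub]
    rw [ev_congr (show 2 * m + 1 = a + b from by omega),
      npow_odd (Nat.odd_iff.mpr (show (a + b) % 2 = 1 from by omega)), neg_smul]
  by_cases hR7 : 2 ≤ a ∧ a ≤ m ∧ a + b = 2 * m + 2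
  · rw [c1_val4' hR7.1 (by omega) (by omega) hR7.2.2]
    unfold g41c g41T
    split_ifs <;> try (exfalso; omega)
    simp only [add_zero, zero_add, sub_zero]
    rw [ev_congr (show 2 * m + 2 = a + b from by omega)]
    rw [show ((m + 1 - a : ℕ) : ℂ) = (m : ℂ) + 1 - (a : ℂ) from by
      rw [Nat.cast_sub (by omega : a ≤ m + 1)]; push_cast; ring]
  by_cases hR8 : 2 ≤ b ∧ b ≤ m ∧ a + b = 2 * m + 2
  · rw [c1_val4' (by omega) (by omega) hR8.1 hR8.2.2]
    unfold g41c g41T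
    split_ifs <;> try (exfalso; omega)
    simp only [add_zero, zero_add, zero_sub]
    rw [ev_congr (show 2 * m + 2 = a + b from by omega)]
    have h' : (a : ℂ) + (b : ℂ) = 2 * (m : ℂ) + 2 := by exact_mod_cast hR8.2.2
    have hco : (-1 : ℂ) ^ a * ((m : ℂ) + 1 - (a : ℂ))
        = -((-1 : ℂ) ^ b * ((m + 1 - b : ℕ) : ℂ)) := by
      rw [Nat.cast_sub (by omega : b ≤ m + 1),
        npow_even (Nat.even_iff.mpr (show (a + b) % 2 = 0 from by omega))]
      push_cast
      linear_combination (-((-1 : ℂ) ^ b)) * h'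
    rw [hco, neg_smul]
  by_cases hR9 : a = m + 1 ∧ b = m + 1
  · obtain ⟨ha, hb⟩ := hR9
    subst ha; subst hb
    rw [c1_val4' (by omega) (by omega) (by omega) (by omega)]
    unfold g41c g41T
    split_ifs <;> try (exfalso; omega)
    rw [show (m : ℂ) + 1 - ((m + 1 : ℕ) : ℂ) = 0 from by push_cast; ring]
    simp
  · rw [c1_zero' (by omega) (by omega) (by omega) (by omega)]
    unfold g41c g41T
    split_ifs <;> try (exfalso; omega)
    simp

lemma psibarc_decomp (m k : ℕ) (hk : 1 ≤ k) (a b : ℕ) :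
    psibarc m k a b = c2 m k a b • ev (2 * m + 2) (a + b + k - 1) := by
  by_cases h1 : a = 2 ∧ 3 ≤ b ∧ b ≤ 2 * m - 1 - k
  · rw [c2_val1 h1.1 h1.2.1 h1.2.2]
    unfold psibarc psibarT
    split_ifs <;> try (exfalso; omega)
    simp only [sub_zero, one_smul]
    exact ev_congr (by omega)
  by_cases h2 : b = 2 ∧ 3 ≤ a ∧ a ≤ 2 * m - 1 - k
  · rw [c2_val2 h2.1 h2.2.1 h2.2.2]
    unfold psibarc psibarT
    split_ifs <;> try (exfalso; omega)
    simp only [zero_sub]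
    rw [ev_congr (show a + 1 + k = a + b + k - 1 from by omega)]
    simp
  · rw [c2_zero (by tauto)]
    unfold psibarc psibarT
    split_ifs <;> try (exfalso; omega)
    simp

lemma ev_in {n i : ℕ} (h1 : 1 ≤ i) (h2 : i ≤ n) :
    ev n i = Pi.single (⟨i - 1, by omega⟩ : Fin n) 1 := dif_pos ⟨h1, h2⟩

lemma brk_apply {n : ℕ} (c : ℕ → ℕ → (Fin n → ℂ)) (x y : Fin n → ℂ) :
    brk c x y = ∑ i : Fin n, ∑ j : Fin n, (x i * y j) • c (i.val + 1) (j.val + 1) := by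
  simp [brk, LinearMap.sum_apply, LinearMap.smulRight_apply, LinearMap.proj_apply, smul_smul]

lemma brk_ev_in {n : ℕ} (c : ℕ → ℕ → (Fin n → ℂ)) {i j : ℕ}
    (hi1 : 1 ≤ i) (hi2 : i ≤ n) (hj1 : 1 ≤ j) (hj2 : j ≤ n) :
    brk c (ev n i) (ev n j) = c i j := by
  rw [brk_apply, ev_in hi1 hi2, ev_in hj1 hj2]
  rw [Finset.sum_eq_single (⟨i - 1, by omega⟩ : Fin n)]
  · rw [Finset.sum_eq_single (⟨j - 1, by omega⟩ : Fin n)]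
    · simp only [Pi.single_eq_same, one_mul, one_smul]
      show c (i - 1 + 1) (j - 1 + 1) = c i j
      rw [show i - 1 + 1 = i from by omega, show j - 1 + 1 = j from by omega]
    · intro b _ hb
      simp [Pi.single_eq_of_ne hb]
    · simp
  · intro b _ hb
    simp [Pi.single_eq_of_ne hb]
  · simp

lemma Cc_decomp (m k : ℕ) (hm : 4 ≤ m) (hk : 1 ≤ k) (a b : ℕ) :
    Cc m k a b = c1 m a b • ev (2 * m + 2) (a + b)
      + c2 m k a b • ev (2 * m + 2) (a + b + k - 1) := by
  unfold Cc
  rw [g41c_decomp m hm, psibarc_decomp m k hk]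

lemma c1_out {m a b : ℕ} (h : ¬(1 ≤ a ∧ a ≤ 2 * m + 2 ∧ 1 ≤ b ∧ b ≤ 2 * m + 2)) :
    c1 m a b = 0 := by
  rcases eq_or_ne (c1 m a b) 0 with h' | h'
  · exact h'
  · exact absurd (c1_ne h') (by omega)

lemma c2_out {m k a b : ℕ} (h : ¬(1 ≤ a ∧ a ≤ 2 * m + 2 ∧ 1 ≤ b ∧ b ≤ 2 * m + 2)) :
    c2 m k a b = 0 := by
  rcases eq_or_ne (c2 m k a b) 0 with h' | h'
  · exact h'
  · exact absurd (c2_ne h') (by omega)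

lemma brkCc_ev (m k : ℕ) (hm : 4 ≤ m) (hk : 1 ≤ k) (i j : ℕ) :
    brk (Cc m k) (ev (2 * m + 2) i) (ev (2 * m + 2) j) = Cc m k i j := by
  by_cases hi : 1 ≤ i ∧ i ≤ 2 * m + 2
  · by_cases hj : 1 ≤ j ∧ j ≤ 2 * m + 2
    · exact brk_ev_in _ hi.1 hi.2 hj.1 hj.2
    · rw [ev_out hj, map_zero, Cc_decomp m k hm hk, c1_out (by omega), c2_out (by omega)]
      simp
  · rw [ev_out hi, map_zero, LinearMap.zero_apply,
      Cc_decomp m k hm hk, c1_out (by omega), c2_out (by omega)]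
    simp

lemma brk_split (m k : ℕ) (x y : Fin (2 * m + 2) → ℂ) :
    brk (g41c m) x y + brk (psibarc m k) x y = brk (Cc m k) x y := by
  rw [brk_apply, brk_apply, brk_apply, ← Finset.sum_add_distrib]
  refine Finset.sum_congr rfl fun i _ => ?_
  rw [← Finset.sum_add_distrib]
  refine Finset.sum_congr rfl fun j _ => ?_
  unfold Cc
  rw [smul_add]

lemma Cc_anti (m k : ℕ) (a b : ℕ) : Cc m k a b = -Cc m k b a := by
  unfold Cc g41c psibarc
  abel

lemma brk_anti (m k : ℕ) (x y : Fin (2 * m + 2) → ℂ) :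
    brk (Cc m k) x y = - brk (Cc m k) y x := by
  have key : ∀ (i j : Fin (2 * m + 2)), (x i * y j) • Cc m k (i.1 + 1) (j.1 + 1)
      = -((y j * x i) • Cc m k (j.1 + 1) (i.1 + 1)) := by
    intro i j
    rw [Cc_anti m k (i.1 + 1) (j.1 + 1), smul_neg, mul_comm (x i) (y j)]
  rw [brk_apply, brk_apply]
  calc ∑ i : Fin (2 * m + 2), ∑ j : Fin (2 * m + 2),
        (x i * y j) • Cc m k (i.1 + 1) (j.1 + 1)
      = ∑ i : Fin (2 * m + 2), ∑ j : Fin (2 * m + 2),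
        -((y j * x i) • Cc m k (j.1 + 1) (i.1 + 1)) :=
        Finset.sum_congr rfl fun i _ => Finset.sum_congr rfl fun j _ => key i j
    _ = -∑ i : Fin (2 * m + 2), ∑ j : Fin (2 * m + 2),
        (y j * x i) • Cc m k (j.1 + 1) (i.1 + 1) := by simp
    _ = -∑ j : Fin (2 * m + 2), ∑ i : Fin (2 * m + 2),
        (y j * x i) • Cc m k (j.1 + 1) (i.1 + 1) := by rw [Finset.sum_comm]

lemma lin_zero {N : ℕ} (L : (Fin N → ℂ) →ₗ[ℂ] (Fin N → ℂ))
    (h : ∀ i, L (Pi.single i 1) = 0) : ∀ v, L v = 0 := by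
  intro v
  have hv : v = ∑ i, v i • (Pi.single i 1 : Fin N → ℂ) := by
    ext j
    simp [Pi.single_apply]
  rw [hv, map_sum]
  simp [h]

lemma ev_fin {n : ℕ} (i : Fin n) : ev n (i.1 + 1) = Pi.single i 1 := by
  rw [ev_in (by omega) (by omega)]
  have h : (⟨i.1 + 1 - 1, by omega⟩ : Fin n) = i := Fin.ext (by simp)
  rw [h]

noncomputable def JB (m k : ℕ) (x y z : Fin (2 * m + 2) → ℂ) : Fin (2 * m + 2) → ℂ :=
  brk (Cc m k) (brk (Cc m k) x y) z + brk (Cc m k) (brk (Cc m k) y z) x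
    + brk (Cc m k) (brk (Cc m k) z x) y

lemma brk_anti_outer (m k : ℕ) (u v w : Fin (2 * m + 2) → ℂ) :
    brk (Cc m k) (brk (Cc m k) u v) w = -brk (Cc m k) (brk (Cc m k) v u) w := by
  rw [brk_anti m k u v, map_neg, LinearMap.neg_apply]

lemma JB_swap12 (m k : ℕ) (x y z : Fin (2 * m + 2) → ℂ) :
    JB m k x y z = -JB m k y x z := by
  unfold JB
  rw [brk_anti_outer m k x y, brk_anti_outer m k y z, brk_anti_outer m k z x]
  abel

lemma JB_swap23 (m k : ℕ) (x y z : Fin (2 * m + 2) → ℂ) :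
    JB m k x y z = -JB m k x z y := by
  unfold JB
  rw [brk_anti_outer m k x y, brk_anti_outer m k y z, brk_anti_outer m k z x]
  abel

lemma JB_cyc (m k : ℕ) (x y z : Fin (2 * m + 2) → ℂ) :
    JB m k x y z = JB m k z x y := by
  unfold JB; abel

lemma JB_cyc2 (m k : ℕ) (x y z : Fin (2 * m + 2) → ℂ) :
    JB m k x y z = JB m k y z x := by
  unfold JB; abel

lemma JB_diag12 (m k : ℕ) (x z : Fin (2 * m + 2) → ℂ) : JB m k x x z = 0 := by
  have hBxx : brk (Cc m k) x x = 0 := by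
    have h2 : brk (Cc m k) x x + brk (Cc m k) x x = 0 := by
      nth_rewrite 2 [brk_anti m k x x]
      abel
    have h3 : (2 : ℂ) • brk (Cc m k) x x = 0 := by rw [two_smul]; exact h2
    exact (smul_eq_zero.mp h3).resolve_left two_ne_zero
  unfold JB
  rw [hBxx, brk_anti_outer m k z x]
  simp

lemma JB_diag23 (m k : ℕ) (x y : Fin (2 * m + 2) → ℂ) : JB m k x y y = 0 := by
  rw [JB_swap12, JB_swap23, neg_neg, JB_diag12]

lemma JB_diag13 (m k : ℕ) (x y : Fin (2 * m + 2) → ℂ) : JB m k x y x = 0 := by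
  rw [JB_swap23 m k x y x, JB_diag12]
  simp

set_option maxHeartbeats 1000000 in
lemma JB_basis_imp (m k : ℕ)
    (h : ∀ i j l : Fin (2 * m + 2),
      JB m k (Pi.single i 1) (Pi.single j 1) (Pi.single l 1) = 0) :
    ∀ x y z, JB m k x y z = 0 := by
  set B := brk (Cc m k) with hB
  have h1 : ∀ (i j : Fin (2 * m + 2)) z, JB m k (Pi.single i 1) (Pi.single j 1) z = 0 := by
    intro i j z
    have := lin_zero (B (B (Pi.single i 1) (Pi.single j 1))
      + (B.flip (Pi.single i 1)).comp (B (Pi.single j 1))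
      + (B.flip (Pi.single j 1)).comp (B.flip (Pi.single i 1)))
      (fun l => by simpa [JB, hB, LinearMap.add_apply, LinearMap.comp_apply, LinearMap.flip_apply] using h i j l) z
    simpa [JB, hB, LinearMap.add_apply, LinearMap.comp_apply, LinearMap.flip_apply] using this
  have h2 : ∀ (i : Fin (2 * m + 2)) y z, JB m k (Pi.single i 1) y z = 0 := by
    intro i y z
    have := lin_zero (((B.flip z).comp (B (Pi.single i 1)))
      + ((B.flip (Pi.single i 1)).comp (B.flip z))
      + B (B z (Pi.single i 1)))
      (fun j => by simpa [JB, hB, LinearMap.add_apply, LinearMap.comp_apply, LinearMap.flip_apply] using h1 i j z) y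
    simpa [JB, hB, LinearMap.add_apply, LinearMap.comp_apply, LinearMap.flip_apply] using this
  intro x y z
  have := lin_zero (((B.flip z).comp (B.flip y)) + B (B y z)
    + ((B.flip y).comp (B z)))
    (fun i => by simpa [JB, hB, LinearMap.add_apply, LinearMap.comp_apply, LinearMap.flip_apply] using h2 i y z) x
  simpa [JB, hB, LinearMap.add_apply, LinearMap.comp_apply, LinearMap.flip_apply] using this

lemma JB_reduce (m k : ℕ)
    (H : ∀ a b c : ℕ, 1 ≤ a → a < b → b < c → c ≤ 2 * m + 2 →
      JB m k (ev (2 * m + 2) a) (ev (2 * m + 2) b) (ev (2 * m + 2) c) = 0) :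
    ∀ i j l : Fin (2 * m + 2),
      JB m k (Pi.single i 1) (Pi.single j 1) (Pi.single l 1) = 0 := by
  intro i j l
  rw [← ev_fin i, ← ev_fin j, ← ev_fin l]
  have hi := i.2
  have hj := j.2
  have hl := l.2
  rcases Nat.lt_trichotomy (i.1 + 1) (j.1 + 1) with hab | hab | hab
  · rcases Nat.lt_trichotomy (j.1 + 1) (l.1 + 1) with hbc | hbc | hbc
    · exact H _ _ _ (by omega) hab hbc (by omega)
    · rw [show l.1 + 1 = j.1 + 1 from hbc.symm]
      exact JB_diag23 m k _ _
    · rcases Nat.lt_trichotomy (i.1 + 1) (l.1 + 1) with hac | hac | hac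
      · rw [JB_swap23, neg_eq_zero]
        exact H _ _ _ (by omega) hac hbc (by omega)
      · rw [show l.1 + 1 = i.1 + 1 from hac.symm]
        exact JB_diag13 m k _ _
      · rw [JB_cyc]
        exact H _ _ _ (by omega) hac hab (by omega)
  · rw [show j.1 + 1 = i.1 + 1 from hab.symm]
    exact JB_diag12 m k _ _
  · rcases Nat.lt_trichotomy (i.1 + 1) (l.1 + 1) with hac | hac | hac
    · rw [JB_swap12, neg_eq_zero]
      exact H _ _ _ (by omega) hab hac (by omega)
    · rw [show l.1 + 1 = i.1 + 1 from hac.symm]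
      exact JB_diag13 m k _ _
    · rcases Nat.lt_trichotomy (j.1 + 1) (l.1 + 1) with hbc | hbc | hbc
      · rw [JB_cyc2]
        exact H _ _ _ (by omega) hbc hac (by omega)
      · rw [show l.1 + 1 = j.1 + 1 from hbc.symm]
        exact JB_diag23 m k _ _
      · rw [JB_cyc, JB_swap23, neg_eq_zero]
        exact H _ _ _ (by omega) hbc hab (by omega)

lemma JB_ev (m k : ℕ) (hm : 4 ≤ m) (hk : 1 ≤ k) (a b c : ℕ) :
    JB m k (ev (2 * m + 2) a) (ev (2 * m + 2) b) (ev (2 * m + 2) c) =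
      (c1 m a b * c1 m (a + b) c + c1 m b c * c1 m (b + c) a
        + c1 m c a * c1 m (c + a) b) • ev (2 * m + 2) (a + b + c)
      + (c1 m a b * c2 m k (a + b) c + c2 m k a b * c1 m (a + b + k - 1) c
        + c1 m b c * c2 m k (b + c) a + c2 m k b c * c1 m (b + c + k - 1) a
        + c1 m c a * c2 m k (c + a) b + c2 m k c a * c1 m (c + a + k - 1) b)
          • ev (2 * m + 2) (a + b + c + k - 1)
      + (c2 m k a b * c2 m k (a + b + k - 1) c + c2 m k b c * c2 m k (b + c + k - 1) a
        + c2 m k c a * c2 m k (c + a + k - 1) b) • ev (2 * m + 2) (a + b + c + 2 * k - 2) := by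
  unfold JB
  rw [brkCc_ev m k hm hk a b, brkCc_ev m k hm hk b c, brkCc_ev m k hm hk c a]
  rw [Cc_decomp m k hm hk a b, Cc_decomp m k hm hk b c, Cc_decomp m k hm hk c a]
  simp only [map_add, map_smul, LinearMap.add_apply, LinearMap.smul_apply]
  rw [brkCc_ev m k hm hk (a + b) c, brkCc_ev m k hm hk (a + b + k - 1) c,
    brkCc_ev m k hm hk (b + c) a, brkCc_ev m k hm hk (b + c + k - 1) a,
    brkCc_ev m k hm hk (c + a) b, brkCc_ev m k hm hk (c + a + k - 1) b]
  rw [Cc_decomp m k hm hk (a + b) c, Cc_decomp m k hm hk (a + b + k - 1) c,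
    Cc_decomp m k hm hk (b + c) a, Cc_decomp m k hm hk (b + c + k - 1) a,
    Cc_decomp m k hm hk (c + a) b, Cc_decomp m k hm hk (c + a + k - 1) b]
  rw [ev_congr (show a + b + k - 1 + c = a + b + c + k - 1 from by omega),
    ev_congr (show a + b + k - 1 + c + k - 1 = a + b + c + 2 * k - 2 from by omega),
    ev_congr (show b + c + a = a + b + c from by omega),
    ev_congr (show b + c + a + k - 1 = a + b + c + k - 1 from by omega),
    ev_congr (show b + c + k - 1 + a = a + b + c + k - 1 from by omega),
    ev_congr (show b + c + k - 1 + a + k - 1 = a + b + c + 2 * k - 2 from by omega),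
    ev_congr (show c + a + b = a + b + c from by omega),
    ev_congr (show c + a + b + k - 1 = a + b + c + k - 1 from by omega),
    ev_congr (show c + a + k - 1 + b = a + b + c + k - 1 from by omega),
    ev_congr (show c + a + k - 1 + b + k - 1 = a + b + c + 2 * k - 2 from by omega)]
  simp only [smul_add, smul_smul, add_smul]
  abel

lemma F0_zero (m : ℕ) (hm : 4 ≤ m) (a b c : ℕ) (ha : 1 ≤ a) (hab : a < b) (hbc : b < c)
    (hc : c ≤ 2 * m + 2) :
    c1 m a b * c1 m (a + b) c + c1 m b c * c1 m (b + c) a + c1 m c a * c1 m (c + a) b = 0 := by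
  by_cases ha1 : a = 1
  · subst ha1
    by_cases hs : b + c = 2 * m
    · rw [c1_val1 (m := m) (a := 1) (b := b) rfl (by omega) (Or.inl (by omega)),
        c1_val3' (m := m) (a := 1 + b) (b := c) (by omega) (by omega) (by omega),
        c1_zero' (m := m) (a := b) (b := c) (by omega) (by omega) (by omega) (by omega),
        c1_val2 (m := m) (a := c) (b := 1) rfl (by omega) (Or.inl (by omega)),
        c1_val3' (m := m) (a := c + 1) (b := b) (by omega) (by omega) (by omega)]
      rw [npow_even (show Even ((1 + b) + (c + 1)) from Nat.even_iff.mpr (by omega))]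
      ring
    by_cases hs2 : b + c = 2 * m + 1
    · rw [c1_val1 (m := m) (a := 1) (b := b) rfl (by omega) (Or.inl (by omega)),
        c1_val4' (m := m) (a := 1 + b) (b := c) (by omega) (by omega) (by omega) (by omega),
        c1_val3' (m := m) (a := b) (b := c) (by omega) (by omega) (by omega),
        c1_val2 (m := m) (a := b + c) (b := 1) rfl (by omega) (Or.inr (by omega)),
        c1_val2 (m := m) (a := c) (b := 1) rfl (by omega) (Or.inl (by omega)),
        c1_val4' (m := m) (a := c + 1) (b := b) (by omega) (by omega) (by omega) (by omega)]
      have hbc' : (b : ℂ) + (c : ℂ) = 2 * (m : ℂ) + 1 := by exact_mod_cast hs2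
      rw [show 1 + b = b + 1 from by omega]
      simp only [pow_succ]
      rw [npow_odd (show Odd (c + b) from Nat.odd_iff.mpr (by omega))]
      push_cast
      linear_combination ((-1 : ℂ) ^ b) * hbc'
    · rw [c1_zero' (m := m) (a := 1 + b) (b := c) (by omega) (by omega) (by omega) (by omega),
        c1_zero' (m := m) (a := c + 1) (b := b) (by omega) (by omega) (by omega) (by omega)]
      by_cases h22 : b + c = 2 * m + 2
      · rw [c1_zero' (m := m) (a := b + c) (b := 1) (by omega) (by omega) (by omega) (by omega)]
        ring
      · rw [c1_zero' (m := m) (a := b) (b := c) (by omega) (by omega) (by omega) (by omega)]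
        ring
  · have t1 : c1 m a b * c1 m (a + b) c = 0 := by
      rcases eq_or_ne (c1 m a b) 0 with h | h
      · rw [h, zero_mul]
      · have hd := c1_ne h
        rw [c1_zero' (m := m) (a := a + b) (b := c) (by omega) (by omega) (by omega) (by omega),
          mul_zero]
    have t2 : c1 m b c * c1 m (b + c) a = 0 := by
      rcases eq_or_ne (c1 m b c) 0 with h | h
      · rw [h, zero_mul]
      · have hd := c1_ne h
        rw [c1_zero' (m := m) (a := b + c) (b := a) (by omega) (by omega) (by omega) (by omega),
          mul_zero]
    have t3 : c1 m c a * c1 m (c + a) b = 0 := by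
      rcases eq_or_ne (c1 m c a) 0 with h | h
      · rw [h, zero_mul]
      · have hd := c1_ne h
        rw [c1_zero' (m := m) (a := c + a) (b := b) (by omega) (by omega) (by omega) (by omega),
          mul_zero]
    rw [t1, t2, t3]
    ring

lemma F2_zero (m k : ℕ) (hm : 4 ≤ m) (hk : 1 ≤ k) (a b c : ℕ) (ha : 1 ≤ a) (hab : a < b)
    (hbc : b < c) (hc : c ≤ 2 * m + 2) :
    c2 m k a b * c2 m k (a + b + k - 1) c + c2 m k b c * c2 m k (b + c + k - 1) a
      + c2 m k c a * c2 m k (c + a + k - 1) b = 0 := by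
  have t1 : c2 m k a b * c2 m k (a + b + k - 1) c = 0 := by
    rcases eq_or_ne (c2 m k a b) 0 with h | h
    · rw [h, zero_mul]
    · have hd := c2_ne h
      rw [c2_zero (m := m) (k := k) (a := a + b + k - 1) (b := c) (by omega), mul_zero]
  have t2 : c2 m k b c * c2 m k (b + c + k - 1) a = 0 := by
    rcases eq_or_ne (c2 m k b c) 0 with h | h
    · rw [h, zero_mul]
    · have hd := c2_ne h
      rw [c2_zero (m := m) (k := k) (a := b + c + k - 1) (b := a) (by omega), mul_zero]
  have t3 : c2 m k c a * c2 m k (c + a + k - 1) b = 0 := by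
    rcases eq_or_ne (c2 m k c a) 0 with h | h
    · rw [h, zero_mul]
    · have hd := c2_ne h
      rw [c2_zero (m := m) (k := k) (a := c + a + k - 1) (b := b) (by omega), mul_zero]
  rw [t1, t2, t3]
  ring

lemma F1_zero (m k : ℕ) (hm : 4 ≤ m) (hk1 : 1 ≤ k) (hk2 : k ≤ 2 * m - 4) (hk5 : 2 * m - 5 ≤ k)
    (a b c : ℕ) (ha : 1 ≤ a) (hab : a < b) (hbc : b < c) (hc : c ≤ 2 * m + 2) :
    c1 m a b * c2 m k (a + b) c + c2 m k a b * c1 m (a + b + k - 1) c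
      + c1 m b c * c2 m k (b + c) a + c2 m k b c * c1 m (b + c + k - 1) a
      + c1 m c a * c2 m k (c + a) b + c2 m k c a * c1 m (c + a + k - 1) b = 0 := by
  by_cases hA : a = 1 ∧ b = 2
  · obtain ⟨rfl, rfl⟩ := hA
    rw [c2_zero (m := m) (k := k) (a := 1 + 2) (b := c) (by omega),
      c2_zero (m := m) (k := k) (a := 1) (b := 2) (by omega),
      c2_zero (m := m) (k := k) (a := 2 + c) (b := 1) (by omega),
      c2_zero (m := m) (k := k) (a := c) (b := 1) (by omega)]
    by_cases hcr : c ≤ 2 * m - 2 - k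
    · rw [c2_val1 (m := m) (k := k) (a := 2) (b := c) rfl (by omega) (by omega),
        c1_val2 (m := m) (a := 2 + c + k - 1) (b := 1) rfl (by omega) (Or.inl (by omega)),
        c1_val2 (m := m) (a := c) (b := 1) rfl (by omega) (Or.inl (by omega)),
        c2_val2 (m := m) (k := k) (a := c + 1) (b := 2) rfl (by omega) (by omega)]
      ring
    · have t4 : c2 m k 2 c * c1 m (2 + c + k - 1) 1 = 0 := by
        rcases eq_or_ne (c2 m k 2 c) 0 with h | h
        · rw [h, zero_mul]
        · have hd := c2_ne h
          rw [c1_zero' (m := m) (a := 2 + c + k - 1) (b := 1)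
            (by omega) (by omega) (by omega) (by omega), mul_zero]
      have t5 : c2 m k (c + 1) 2 = 0 := c2_zero (by omega)
      rw [t4, t5]
      ring
  by_cases hB : a = 1
  · subst hB
    rw [c2_zero (m := m) (k := k) (a := 1 + b) (b := c) (by omega),
      c2_zero (m := m) (k := k) (a := 1) (b := b) (by omega),
      c2_zero (m := m) (k := k) (a := b + c) (b := 1) (by omega),
      c2_zero (m := m) (k := k) (a := b) (b := c) (by omega),
      c2_zero (m := m) (k := k) (a := c + 1) (b := b) (by omega),
      c2_zero (m := m) (k := k) (a := c) (b := 1) (by omega)]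
    ring
  by_cases hC : a = 2
  · subst hC
    have t2 : c2 m k 2 b * c1 m (2 + b + k - 1) c = 0 := by
      rcases eq_or_ne (c2 m k 2 b) 0 with h | h
      · rw [h, zero_mul]
      · have hd := c2_ne h
        rw [c1_zero' (m := m) (a := 2 + b + k - 1) (b := c)
          (by omega) (by omega) (by omega) (by omega), mul_zero]
    have t6 : c2 m k c 2 * c1 m (c + 2 + k - 1) b = 0 := by
      rcases eq_or_ne (c2 m k c 2) 0 with h | h
      · rw [h, zero_mul]
      · have hd := c2_ne h
        rw [c1_zero' (m := m) (a := c + 2 + k - 1) (b := b)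
          (by omega) (by omega) (by omega) (by omega), mul_zero]
    rw [c2_zero (m := m) (k := k) (a := 2 + b) (b := c) (by omega), t2,
      c2_zero (m := m) (k := k) (a := b + c) (b := 2) (by omega),
      c2_zero (m := m) (k := k) (a := b) (b := c) (by omega),
      c2_zero (m := m) (k := k) (a := c + 2) (b := b) (by omega), t6]
    ring
  · rw [c2_zero (m := m) (k := k) (a := a + b) (b := c) (by omega),
      c2_zero (m := m) (k := k) (a := a) (b := b) (by omega),
      c2_zero (m := m) (k := k) (a := b + c) (b := a) (by omega),
      c2_zero (m := m) (k := k) (a := b) (b := c) (by omega),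
      c2_zero (m := m) (k := k) (a := c + a) (b := b) (by omega),
      c2_zero (m := m) (k := k) (a := c) (b := a) (by omega)]
    ring

lemma JB_sorted (m k : ℕ) (hm : 4 ≤ m) (hk1 : 1 ≤ k) (hk2 : k ≤ 2 * m - 4)
    (hk5 : 2 * m - 5 ≤ k) (a b c : ℕ) (ha : 1 ≤ a) (hab : a < b) (hbc : b < c)
    (hc : c ≤ 2 * m + 2) :
    JB m k (ev (2 * m + 2) a) (ev (2 * m + 2) b) (ev (2 * m + 2) c) = 0 := by
  rw [JB_ev m k hm hk1 a b c, F0_zero m hm a b c ha hab hbc hc,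
    F1_zero m k hm hk1 hk2 hk5 a b c ha hab hbc hc,
    F2_zero m k hm hk1 a b c ha hab hbc hc]
  simp

lemma ev_top_ne (m : ℕ) : ev (2 * m + 2) (2 * m + 2) ≠ 0 := by
  rw [ev_in (by omega) (by omega)]
  intro h
  have h2 := congrFun h ⟨2 * m + 2 - 1, by omega⟩
  rw [Pi.single_eq_same] at h2
  exact one_ne_zero h2

lemma witness (m k : ℕ) (hm : 4 ≤ m) (hk1 : 1 ≤ k) (hk6 : k ≤ 2 * m - 6) :
    JB m k (ev (2 * m + 2) 2) (ev (2 * m + 2) 3) (ev (2 * m + 2) (2 * m - 2 - k)) ≠ 0 := by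
  rw [JB_ev m k hm hk1 2 3 (2 * m - 2 - k)]
  -- F0 factors vanish
  rw [c1_zero' (m := m) (a := 2) (b := 3) (by omega) (by omega) (by omega) (by omega),
    c1_zero' (m := m) (a := 3) (b := 2 * m - 2 - k) (by omega) (by omega) (by omega) (by omega),
    c1_zero' (m := m) (a := 2 * m - 2 - k) (b := 2) (by omega) (by omega) (by omega) (by omega)]
  -- F2 second factors vanish
  rw [c2_zero (m := m) (k := k) (a := 2 + 3 + k - 1) (b := 2 * m - 2 - k) (by omega),
    c2_zero (m := m) (k := k) (a := 3) (b := 2 * m - 2 - k) (by omega),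
    c2_zero (m := m) (k := k) (a := 2 * m - 2 - k + 2 + k - 1) (b := 3) (by omega)]
  -- F1 values
  rw [c2_val1 (m := m) (k := k) (a := 2) (b := 3) rfl (by omega) (by omega),
    c1_val4' (m := m) (a := 2 + 3 + k - 1) (b := 2 * m - 2 - k)
      (by omega) (by omega) (by omega) (by omega),
    c2_zero (m := m) (k := k) (a := 3 + (2 * m - 2 - k)) (b := 2) (by omega),
    c2_zero (m := m) (k := k) (a := 2 * m - 2 - k + 2) (b := 3) (by omega),
    c2_val2 (m := m) (k := k) (a := 2 * m - 2 - k) (b := 2) rfl (by omega) (by omega),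
    c1_val4' (m := m) (a := 2 * m - 2 - k + 2 + k - 1) (b := 3)
      (by omega) (by omega) (by omega) (by omega)]
  rw [show 2 + 3 + k - 1 = k + 4 from by omega,
    show 2 * m - 2 - k + 2 + k - 1 = 2 * m - 1 from by omega,
    show 2 + 3 + (2 * m - 2 - k) + k - 1 = 2 * m + 2 from by omega]
  simp only [zero_mul, mul_zero, add_zero, zero_add, zero_smul, smul_zero]
  apply smul_ne_zero _ (ev_top_ne m)
  have hc1 : ((k + 4 : ℕ) : ℂ) = (k : ℂ) + 4 := by push_cast; ring
  have hc2 : ((2 * m - 1 : ℕ) : ℂ) = 2 * (m : ℂ) - 1 := by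
    rw [Nat.cast_sub (by omega)]; push_cast; ring
  rw [hc1, hc2]
  rw [show (-1 : ℂ) ^ (2 * m - 1) = -1 from Odd.neg_one_pow (Nat.odd_iff.mpr (by omega))]
  rcases Nat.even_or_odd k with hke | hko
  · have hkm := Nat.even_iff.mp hke
    rw [show (-1 : ℂ) ^ (k + 4) = 1 from Even.neg_one_pow (Nat.even_iff.mpr (by omega))]
    intro h
    have : (k : ℂ) + 1 = 0 := by linear_combination -h
    have h2 : ((k + 1 : ℕ) : ℂ) = 0 := by push_cast; linear_combination this
    exact (Nat.cast_ne_zero.mpr (by omega)) h2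
  · have hkm := Nat.odd_iff.mp hko
    rw [show (-1 : ℂ) ^ (k + 4) = -1 from Odd.neg_one_pow (Nat.odd_iff.mpr (by omega))]
    intro h
    have : (2 * (m : ℂ) - 5 - (k : ℂ)) = 0 := by linear_combination -h
    have h2 : ((2 * m - 5 - k : ℕ) : ℂ) = 0 := by
      rw [Nat.cast_sub (by omega), Nat.cast_sub (by omega)]
      push_cast
      linear_combination this
    exact (Nat.cast_ne_zero.mpr (by omega)) h2

/-- For `m ≥ 4` and `1 ≤ k ≤ 2m-4`, the bracket `μ₁ + ψ̄_{2,k}` on `ℂ^{2m+2}`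
satisfies the Jacobi identity iff `k = 2m-5` or `k = 2m-4`. -/
theorem stmt_16 (m k : ℕ) (hm : 4 ≤ m) (hk1 : 1 ≤ k) (hk2 : k ≤ 2 * m - 4) :
    Jacobi (fun x y => brk (g41c m) x y + brk (psibarc m k) x y) ↔
      (k = 2 * m - 5 ∨ k = 2 * m - 4) := by
  have hμ : ∀ x y : Fin (2 * m + 2) → ℂ,
      brk (g41c m) x y + brk (psibarc m k) x y = brk (Cc m k) x y := brk_split m k
  constructor
  · intro hJ
    by_contra hcon
    push_neg at hcon
    have hk6 : k ≤ 2 * m - 6 := by omega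
    apply witness m k hm hk1 hk6
    have h0 := hJ (ev (2 * m + 2) 2) (ev (2 * m + 2) 3) (ev (2 * m + 2) (2 * m - 2 - k))
    simp only [hμ] at h0
    exact h0
  · intro hk'
    intro x y z
    simp only [hμ]
    have hk5 : 2 * m - 5 ≤ k := by omega
    exact JB_basis_imp m k
      (JB_reduce m k (fun a b c ha hab hbc hc => JB_sorted m k hm hk1 hk2 hk5 a b c ha hab hbc hc))
      x y z
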